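/- For every real number z with 0 < z < 1, it holds that z(3 − 3z + z²) + (−3 + 2z + 2z² − 2z³)·ln(1 + z) > (1/6)·z²·(3 + 6z − 14z² + 10z³ − 4z⁴). -/

import Mathlib

/-!
The difference of the two sides factors as
`(-3 + 2z + 2z² - 2z³) * (log (1 + z) - (z - z²/2 + z³/3))`.
The first factor is `-1 - 2(z - 1)²(z + 1) < 0`. The second is negative because
`z - z²/2 + z³/3 - log (1 + z)` vanishes at `0` and has derivative `z³/(1 + z) > 0`.
-/

open Real Set

lemma hasDerivAt_cubic_sub_log_one_add {x : ℝ} (hx : -1 < x) :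
    HasDerivAt (fun t ↦ t - t ^ 2 / 2 + t ^ 3 / 3 - log (1 + t)) (x ^ 3 / (1 + x)) x := by
  have hx' : 1 + x ≠ 0 := by linarith
  refine ((((hasDerivAt_id' x).fun_sub ((hasDerivAt_pow 2 x).div_const 2)).fun_add
    ((hasDerivAt_pow 3 x).div_const 3)).fun_sub (((hasDerivAt_id' x).const_add 1).log hx'))
    |>.congr_deriv ?_
  field_simp
  ring

lemma log_one_add_lt_cubic {x : ℝ} (hx : 0 < x) : log (1 + x) < x - x ^ 2 / 2 + x ^ 3 / 3 := by
  have hmono : StrictMonoOn (fun t ↦ t - t ^ 2 / 2 + t ^ 3 / 3 - log (1 + t)) (Ici 0) := by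
    refine strictMonoOn_of_deriv_pos (convex_Ici 0) (fun t ht ↦ ?_) fun t ht ↦ ?_
    · exact (hasDerivAt_cubic_sub_log_one_add (by linarith [mem_Ici.1 ht])).continuousAt
        |>.continuousWithinAt
    · have ht : 0 < t := by rwa [interior_Ici, mem_Ioi] at ht
      rw [(hasDerivAt_cubic_sub_log_one_add (by linarith)).deriv]
      positivity
  simpa using hmono self_mem_Ici hx.le hx

theorem stmt_3 (z : ℝ) (hz0 : 0 < z) :
    z * (3 - 3*z + z^2) + (-3 + 2*z + 2*z^2 - 2*z^3) * Real.log (1 + z)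
      > (1/6) * z^2 * (3 + 6*z - 14*z^2 + 10*z^3 - 4*z^4) := by
  have hcoeff : -3 + 2*z + 2*z^2 - 2*z^3 < 0 := by nlinarith [sq_nonneg (z - 1)]
  have hfactor : z * (3 - 3*z + z^2) + (-3 + 2*z + 2*z^2 - 2*z^3) * Real.log (1 + z)
      - (1/6) * z^2 * (3 + 6*z - 14*z^2 + 10*z^3 - 4*z^4)
      = (-3 + 2*z + 2*z^2 - 2*z^3) * (Real.log (1 + z) - (z - z^2/2 + z^3/3)) := by ring
  rw [gt_iff_lt, ← sub_pos, hfactor]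
  exact mul_pos_of_neg_of_neg hcoeff (sub_neg.2 (log_one_add_lt_cubic hz0))
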